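/- Let A, B be real symmetric n×n matrices with B positive definite, with B-orthonormal eigenbasis v₁,…,vₙ of the pencil (A,B) (Avᵢ = λᵢBvᵢ, vᵢᵀBvⱼ = δ_{ij}) and eigenvalues λ₁ < λ₂ ≤ … ≤ λₙ. Fix f ∈ span{v₂,…,vₙ} with ‖f‖_B = 1, and for θ ∈ (0, π/2) set x_θ = v₁cos θ + f sin θ. Then for every δ > 0 there exists θ̄ > 0 such that for all θ ∈ (0, θ̄): (1 − δ)·sin θ·‖Af − ρ(x_θ)Bf‖ ≤ ‖Ax_θ − ρ(x_θ)Bx_θ‖ ≤ (1 + δ)·sin θ·‖Af − ρ(x_θ)Bf‖, where ρ is the Rayleigh quotient and ‖·‖ is the Euclidean norm. -/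

import Mathlib

open Matrix

/-- Euclidean norm of a vector in `Fin n → ℝ`, written via the dot product. -/
noncomputable def euclNorm {n : ℕ} (y : Fin n → ℝ) : ℝ := Real.sqrt (y ⬝ᵥ y)

lemma euclNorm_eq_norm {n : ℕ} (y : Fin n → ℝ) :
    euclNorm y = ‖(WithLp.equiv 2 (Fin n → ℝ)).symm y‖ := by
  rw [EuclideanSpace.norm_eq, euclNorm]
  congr 1
  refine Finset.sum_congr rfl fun i _ => ?_
  simp [WithLp.equiv_symm_apply, PiLp.toLp_apply, Real.norm_eq_abs, sq_abs, dotProduct]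
  ring

lemma euclNorm_nonneg {n : ℕ} (y : Fin n → ℝ) : 0 ≤ euclNorm y := Real.sqrt_nonneg _

lemma euclNorm_add_le {n : ℕ} (a b : Fin n → ℝ) :
    euclNorm (a + b) ≤ euclNorm a + euclNorm b := by
  simp only [euclNorm_eq_norm, WithLp.equiv_symm_apply, ← WithLp.toLp_add]
  exact norm_add_le _ _

lemma euclNorm_smul {n : ℕ} (r : ℝ) (y : Fin n → ℝ) :
    euclNorm (r • y) = |r| * euclNorm y := by
  simp only [euclNorm_eq_norm, WithLp.equiv_symm_apply, WithLp.toLp_smul]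
  rw [norm_smul, Real.norm_eq_abs]

lemma euclNorm_pos {n : ℕ} {y : Fin n → ℝ} (h : 0 < y ⬝ᵥ y) : 0 < euclNorm y :=
  Real.sqrt_pos.2 h

lemma euclNorm_lower {n : ℕ} (a b : Fin n → ℝ) :
    euclNorm a - euclNorm b ≤ euclNorm (a + b) := by
  have := euclNorm_add_le (a + b) (-b)
  have hb : euclNorm (-b) = euclNorm b := by
    simpa using euclNorm_smul (-1) b
  simp only [add_neg_cancel_right] at this
  rw [hb] at this
  linarith

lemma dot_sum_right {m : Type*} [Fintype m] {ι : Type*} (s : Finset ι)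
    (y : m → ℝ) (w : ι → m → ℝ) :
    y ⬝ᵥ (∑ j ∈ s, w j) = ∑ j ∈ s, y ⬝ᵥ w j := by
  simp only [dotProduct, Finset.sum_apply, Finset.mul_sum]
  exact Finset.sum_comm

lemma sum_dot_left {m : Type*} [Fintype m] {ι : Type*} (s : Finset ι)
    (y : m → ℝ) (w : ι → m → ℝ) :
    (∑ j ∈ s, w j) ⬝ᵥ y = ∑ j ∈ s, w j ⬝ᵥ y := by
  simp only [dotProduct, Finset.sum_apply, Finset.sum_mul]
  exact Finset.sum_comm

lemma mulVec_sum' {m : Type*} [Fintype m] {ι : Type*} (s : Finset ι)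
    (M : Matrix m m ℝ) (w : ι → m → ℝ) :
    M.mulVec (∑ j ∈ s, w j) = ∑ j ∈ s, M.mulVec (w j) := by
  simpa only [Matrix.mulVecLin_apply] using map_sum M.mulVecLin w s

lemma dot_symm {m : Type*} [Fintype m] {M : Matrix m m ℝ} (hM : M.IsSymm)
    (x y : m → ℝ) : x ⬝ᵥ M.mulVec y = y ⬝ᵥ M.mulVec x := by
  conv_lhs => rw [Matrix.dotProduct_mulVec, ← hM, Matrix.vecMul_transpose,
    dotProduct_comm]

set_option maxHeartbeats 1000000 in
/-- Asymptotic two-sided bound on the eigenresidual: with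
`x_θ = v₁ cos θ + f sin θ`, `f ∈ span{v₂,…,vₙ}`, `‖f‖_B = 1`, for every `δ > 0` there is
`θ̄ > 0` such that for all `θ ∈ (0, θ̄)`,
`(1−δ) sin θ ‖Af − ρ(x_θ)Bf‖ ≤ ‖Ax_θ − ρ(x_θ)Bx_θ‖ ≤ (1+δ) sin θ ‖Af − ρ(x_θ)Bf‖`. -/
theorem eigenresidual_asymptotic_bounds
    {n : ℕ} (hn : 2 ≤ n)
    (A B : Matrix (Fin n) (Fin n) ℝ)
    (hA : A.IsSymm) (hB : B.PosDef)
    (ρ : (Fin n → ℝ) → ℝ)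
    (hρ : ∀ y : Fin n → ℝ, ρ y = (y ⬝ᵥ A.mulVec y) / (y ⬝ᵥ B.mulVec y))
    (lam : Fin n → ℝ) (v : Fin n → Fin n → ℝ)
    (heig : ∀ i, A.mulVec (v i) = lam i • B.mulVec (v i))
    (horth : ∀ i j, v i ⬝ᵥ B.mulVec (v j) = if i = j then 1 else 0)
    (hmono : Monotone lam)
    (hgap : lam ⟨0, by omega⟩ < lam ⟨1, by omega⟩)
    (f : Fin n → ℝ)
    (hfspan : f ∈ Submodule.span ℝ {y : Fin n → ℝ | ∃ j : Fin n, j ≠ ⟨0, by omega⟩ ∧ y = v j})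
    (hfB : f ⬝ᵥ B.mulVec f = 1)
    (xθ : ℝ → (Fin n → ℝ))
    (hxθ : ∀ θ : ℝ, xθ θ = Real.cos θ • v ⟨0, by omega⟩ + Real.sin θ • f) :
    ∀ δ : ℝ, 0 < δ → ∃ θb : ℝ, 0 < θb ∧ ∀ θ : ℝ, 0 < θ → θ < θb →
      (1 - δ) * Real.sin θ * euclNorm (A.mulVec f - ρ (xθ θ) • B.mulVec f)
          ≤ euclNorm (A.mulVec (xθ θ) - ρ (xθ θ) • B.mulVec (xθ θ)) ∧
      euclNorm (A.mulVec (xθ θ) - ρ (xθ θ) • B.mulVec (xθ θ))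
          ≤ (1 + δ) * Real.sin θ * euclNorm (A.mulVec f - ρ (xθ θ) • B.mulVec f) := by
  intro δ hδ
  have hn0 : (0 : ℕ) < n := by omega
  have hn1 : (1 : ℕ) < n := by omega
  set i0 : Fin n := ⟨0, hn0⟩ with hi0
  set i1 : Fin n := ⟨1, hn1⟩ with hi1
  have hgap' : lam i0 < lam i1 := hgap
  have hfspan' : f ∈ Submodule.span ℝ {y : Fin n → ℝ | ∃ j : Fin n, j ≠ i0 ∧ y = v j} :=
    hfspan
  set v1 : Fin n → ℝ := v i0 with hv1
  set l1 : ℝ := lam i0 with hl1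
  have hxθ' : ∀ θ : ℝ, xθ θ = Real.cos θ • v1 + Real.sin θ • f := hxθ
  have hBsymm : B.IsSymm := by rw [Matrix.IsSymm, ← Matrix.conjTranspose_eq_transpose_of_trivial]; exact hB.isHermitian
  -- expand f over the eigenbasis (minus v1)
  have hset : {y : Fin n → ℝ | ∃ j : Fin n, j ≠ i0 ∧ y = v j}
      = Set.range (fun j : {j : Fin n // j ≠ i0} => v (j : Fin n)) := by
    ext y
    constructor
    · rintro ⟨j, hj, rfl⟩; exact ⟨⟨j, hj⟩, rfl⟩
    · rintro ⟨⟨j, hj⟩, rfl⟩; exact ⟨j, hj, rfl⟩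
  rw [hset] at hfspan'
  obtain ⟨c, hc⟩ := (Submodule.mem_span_range_iff_exists_fun ℝ).1 hfspan'
  -- dot products of f with B v_k
  have hfBv : ∀ k : Fin n, f ⬝ᵥ B.mulVec (v k)
      = ∑ j : {j : Fin n // j ≠ i0}, c j * (if (j : Fin n) = k then 1 else 0) := by
    intro k
    rw [← hc, sum_dot_left]
    refine Finset.sum_congr rfl fun j _ => ?_
    rw [smul_dotProduct, horth]
    simp
  have hfBv1 : f ⬝ᵥ B.mulVec v1 = 0 := by
    rw [hv1, hfBv]
    refine Finset.sum_eq_zero fun j _ => ?_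
    simp [j.2]
  have hfBvj : ∀ j : {j : Fin n // j ≠ i0}, f ⬝ᵥ B.mulVec (v (j : Fin n)) = c j := by
    intro j
    rw [hfBv]
    rw [Finset.sum_eq_single j]
    · simp
    · intro b _ hb
      simp [Subtype.ext_iff.not.1 hb, fun h => hb (Subtype.ext h)]
    · simp
  have hv1Bf : v1 ⬝ᵥ B.mulVec f = 0 := by rw [dot_symm hBsymm]; exact hfBv1
  have hv1Bv1 : v1 ⬝ᵥ B.mulVec v1 = 1 := by rw [hv1, horth]; simp
  have hfAv1 : f ⬝ᵥ A.mulVec v1 = 0 := by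
    rw [hv1, heig, dotProduct_smul, smul_eq_mul, ← hv1, hfBv1, mul_zero]
  have hv1Af : v1 ⬝ᵥ A.mulVec f = 0 := by rw [dot_symm hA]; exact hfAv1
  have hv1Av1 : v1 ⬝ᵥ A.mulVec v1 = l1 := by
    rw [hv1, heig, dotProduct_smul, smul_eq_mul, ← hv1, hv1Bv1, mul_one, hl1]
  -- expansion of f ⬝ᵥ B f and f ⬝ᵥ A f
  have hBf_exp : B.mulVec f = ∑ j : {j : Fin n // j ≠ i0}, c j • B.mulVec (v (j : Fin n)) := by
    rw [← hc, mulVec_sum']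
    exact Finset.sum_congr rfl fun j _ => by rw [Matrix.mulVec_smul]
  have hAf_exp : A.mulVec f
      = ∑ j : {j : Fin n // j ≠ i0}, (c j * lam (j : Fin n)) • B.mulVec (v (j : Fin n)) := by
    rw [← hc, mulVec_sum']
    refine Finset.sum_congr rfl fun j _ => ?_
    rw [Matrix.mulVec_smul, heig, smul_smul]
  have hsum1 : ∑ j : {j : Fin n // j ≠ i0}, c j * c j = 1 := by
    rw [← hfB, hBf_exp, dot_sum_right]
    refine (Finset.sum_congr rfl fun j _ => ?_).symm
    rw [dotProduct_smul, smul_eq_mul, hfBvj]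
  set μ : ℝ := f ⬝ᵥ A.mulVec f with hμ
  have hμ_exp : μ = ∑ j : {j : Fin n // j ≠ i0}, c j * c j * lam (j : Fin n) := by
    rw [hμ, hAf_exp, dot_sum_right]
    refine Finset.sum_congr rfl fun j _ => ?_
    rw [dotProduct_smul, smul_eq_mul, hfBvj]
    ring
  -- μ > l1
  have hlam_ge : ∀ j : {j : Fin n // j ≠ i0}, lam i1 ≤ lam (j : Fin n) := by
    intro j
    refine hmono ?_
    have hne : (j : Fin n).val ≠ 0 := fun h => j.2 (Fin.ext h)
    rw [Fin.le_def]
    exact Nat.one_le_iff_ne_zero.2 hne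
  have hμgt : l1 < μ := by
    have key : lam i1 - l1 ≤ μ - l1 := by
      calc lam i1 - l1 = ∑ j : {j : Fin n // j ≠ i0}, c j * c j * (lam i1 - l1) := by
            rw [← Finset.sum_mul, hsum1, one_mul]
        _ ≤ ∑ j : {j : Fin n // j ≠ i0}, c j * c j * (lam (j : Fin n) - l1) := by
            refine Finset.sum_le_sum fun j _ => ?_
            have := hlam_ge j
            nlinarith [mul_self_nonneg (c j)]
        _ = μ - l1 := by
            rw [hμ_exp]
            have hsplit : ∑ j : {j : Fin n // j ≠ i0}, c j * c j * (lam (j : Fin n) - l1)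
                = (∑ j : {j : Fin n // j ≠ i0}, c j * c j * lam (j : Fin n))
                  - (∑ j : {j : Fin n // j ≠ i0}, c j * c j) * l1 := by
              rw [Finset.sum_mul, ← Finset.sum_sub_distrib]
              exact Finset.sum_congr rfl fun j _ => by ring
            rw [hsplit, hsum1, one_mul]
    linarith
  -- the Rayleigh quotient along the path
  have hρθ : ∀ θ : ℝ, ρ (xθ θ) = l1 + (μ - l1) * Real.sin θ ^ 2 := by
    intro θ
    have hnum : (xθ θ) ⬝ᵥ A.mulVec (xθ θ) = l1 * Real.cos θ ^ 2 + μ * Real.sin θ ^ 2 := by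
      rw [hxθ' θ]
      simp only [Matrix.mulVec_add, Matrix.mulVec_smul, add_dotProduct, dotProduct_add,
        smul_dotProduct, dotProduct_smul, smul_eq_mul, hv1Av1, hv1Af, hfAv1, ← hμ]
      ring
    have hden : (xθ θ) ⬝ᵥ B.mulVec (xθ θ) = 1 := by
      rw [hxθ' θ]
      simp only [Matrix.mulVec_add, Matrix.mulVec_smul, add_dotProduct, dotProduct_add,
        smul_dotProduct, dotProduct_smul, smul_eq_mul, hv1Bv1, hv1Bf, hfBv1, hfB]
      nlinarith [Real.sin_sq_add_cos_sq θ]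
    rw [hρ, hnum, hden, div_one]
    linear_combination l1 * Real.sin_sq_add_cos_sq θ
  -- residual formula
  have hres : ∀ θ : ℝ, A.mulVec (xθ θ) - ρ (xθ θ) • B.mulVec (xθ θ)
      = Real.sin θ • ((A.mulVec f - ρ (xθ θ) • B.mulVec f)
          + (Real.cos θ * Real.sin θ * (l1 - μ)) • B.mulVec v1) := by
    intro θ
    have h1 : A.mulVec (xθ θ) = Real.cos θ • (l1 • B.mulVec v1) + Real.sin θ • A.mulVec f := by
      rw [hxθ' θ, Matrix.mulVec_add, Matrix.mulVec_smul, Matrix.mulVec_smul, hv1, heig, ← hv1,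
        ← hl1]
    have h2 : B.mulVec (xθ θ) = Real.cos θ • B.mulVec v1 + Real.sin θ • B.mulVec f := by
      rw [hxθ' θ, Matrix.mulVec_add, Matrix.mulVec_smul, Matrix.mulVec_smul]
    rw [h1, h2, hρθ θ]
    have hcs : Real.cos θ ^ 2 = 1 - Real.sin θ ^ 2 := Real.cos_sq' θ
    ext i
    simp only [Pi.add_apply, Pi.sub_apply, Pi.smul_apply, smul_eq_mul]
    ring
  -- the limiting residual direction w0 and its positive norm
  set w0 : Fin n → ℝ := A.mulVec f - l1 • B.mulVec f with hw0
  have hfw0 : f ⬝ᵥ w0 = μ - l1 := by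
    rw [hw0, dotProduct_sub, dotProduct_smul, smul_eq_mul, hfB, ← hμ, mul_one]
  have hw0ne : w0 ≠ 0 := by
    intro h
    rw [h, dotProduct_zero] at hfw0
    linarith
  have hw0pos : 0 < w0 ⬝ᵥ w0 := by
    obtain ⟨i, hi⟩ := Function.ne_iff.1 hw0ne
    rw [dotProduct]
    refine Finset.sum_pos' (fun j _ => mul_self_nonneg _) ⟨i, Finset.mem_univ i, ?_⟩
    exact mul_self_pos.2 (by simpa using hi)
  set c0 : ℝ := euclNorm w0 with hc0def
  have hc0 : 0 < c0 := euclNorm_pos hw0pos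
  set K : ℝ := |l1 - μ| * (euclNorm (B.mulVec v1) + euclNorm (B.mulVec f)) + 1 with hKdef
  clear_value w0 c0 K
  have hKnn : 0 ≤ |l1 - μ| * (euclNorm (B.mulVec v1) + euclNorm (B.mulVec f)) :=
    mul_nonneg (abs_nonneg _) (add_nonneg (euclNorm_nonneg _) (euclNorm_nonneg _))
  have hK1 : 1 ≤ K := by rw [hKdef]; linarith
  have hKpos : 0 < K := by linarith
  have hmδ : 0 < min δ 1 := lt_min hδ one_pos
  refine ⟨min 1 (min δ 1 * (c0 / 2) / K), lt_min one_pos (by positivity), ?_⟩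
  intro θ hθ0 hθb
  have hθ1 : θ < 1 := lt_of_lt_of_le hθb (min_le_left _ _)
  have hθK : θ * K < min δ 1 * (c0 / 2) := by
    have h2 : θ < min δ 1 * (c0 / 2) / K := lt_of_lt_of_le hθb (min_le_right _ _)
    calc θ * K < (min δ 1 * (c0 / 2) / K) * K := mul_lt_mul_of_pos_right h2 hKpos
      _ = min δ 1 * (c0 / 2) := div_mul_cancel₀ _ (ne_of_gt hKpos)
  have hresθ := hres θ
  have hρθ' := hρθ θ
  set s : ℝ := Real.sin θ with hsdef
  have hs0 : 0 < s := Real.sin_pos_of_pos_of_lt_pi hθ0 (by linarith [Real.pi_gt_three])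
  have hsθ : s ≤ θ := Real.sin_le hθ0.le
  have hs1 : s ≤ 1 := by linarith
  have hcos : |Real.cos θ| ≤ 1 := Real.abs_cos_le_one θ
  set ρθ : ℝ := ρ (xθ θ) with hρdef
  set w : Fin n → ℝ := A.mulVec f - ρθ • B.mulVec f with hwdef
  set e : ℝ := Real.cos θ * s * (l1 - μ) with hedef
  set u : ℝ := euclNorm (B.mulVec v1) with hudef
  set uf : ℝ := euclNorm (B.mulVec f) with hufdef
  clear_value s ρθ w e u uf
  have hunn : 0 ≤ u := by rw [hudef]; exact euclNorm_nonneg _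
  have hufnn : 0 ≤ uf := by rw [hufdef]; exact euclNorm_nonneg _
  -- lower bound on ‖w‖
  have hw_eq : w = w0 + (-((μ - l1) * s ^ 2)) • B.mulVec f := by
    rw [hwdef, hw0, hρθ']
    ext i
    simp only [Pi.add_apply, Pi.sub_apply, Pi.smul_apply, smul_eq_mul]
    ring
  have hKge : |l1 - μ| * (u + uf) + 1 = K := by rw [hKdef]
  have hMuf : |l1 - μ| * uf ≤ K := by
    have h0 : 0 ≤ |l1 - μ| * u := mul_nonneg (abs_nonneg _) hunn
    have h1 : |l1 - μ| * (u + uf) = |l1 - μ| * u + |l1 - μ| * uf := by ring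
    linarith
  have hMu : |l1 - μ| * u ≤ K := by
    have h0 : 0 ≤ |l1 - μ| * uf := mul_nonneg (abs_nonneg _) hufnn
    have h1 : |l1 - μ| * (u + uf) = |l1 - μ| * u + |l1 - μ| * uf := by ring
    linarith
  have hwlow : c0 - s * K ≤ euclNorm w := by
    have h1 := euclNorm_lower w0 ((-((μ - l1) * s ^ 2)) • B.mulVec f)
    rw [euclNorm_smul, ← hw_eq] at h1
    have habs : |(-((μ - l1) * s ^ 2))| = |l1 - μ| * s ^ 2 := by
      rw [abs_neg, abs_mul, abs_sub_comm, abs_of_nonneg (sq_nonneg s)]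
    rw [habs, ← hufdef] at h1
    have hstep : |l1 - μ| * s ^ 2 * uf ≤ s * K := by
      calc |l1 - μ| * s ^ 2 * uf = s * (s * (|l1 - μ| * uf)) := by ring
        _ ≤ s * (1 * (|l1 - μ| * uf)) := by
            refine mul_le_mul_of_nonneg_left ?_ hs0.le
            exact mul_le_mul_of_nonneg_right hs1 (mul_nonneg (abs_nonneg _) hufnn)
        _ = s * (|l1 - μ| * uf) := by ring
        _ ≤ s * K := mul_le_mul_of_nonneg_left hMuf hs0.le
    rw [hc0def]
    linarith
  have hwhalf : c0 / 2 ≤ euclNorm w := by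
    have : s * K ≤ c0 / 2 := by
      have h1 : s * K ≤ θ * K := mul_le_mul_of_nonneg_right hsθ hKpos.le
      have h2 : min δ 1 * (c0 / 2) ≤ c0 / 2 :=
        mul_le_of_le_one_left (by linarith) (min_le_right δ 1)
      linarith
    linarith
  -- perturbation bound
  have hebound : |e| * u ≤ δ * (c0 / 2) := by
    have h1 : |e| ≤ s * |l1 - μ| := by
      rw [hedef, abs_mul, abs_mul, abs_of_pos hs0]
      have h := mul_le_mul_of_nonneg_right hcos (mul_nonneg hs0.le (abs_nonneg (l1 - μ)))
      calc |Real.cos θ| * s * |l1 - μ| = |Real.cos θ| * (s * |l1 - μ|) := by ring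
        _ ≤ 1 * (s * |l1 - μ|) := h
        _ = s * |l1 - μ| := one_mul _
    have h2 : |e| * u ≤ s * |l1 - μ| * u := mul_le_mul_of_nonneg_right h1 hunn
    have h3 : s * |l1 - μ| * u ≤ s * K := by
      calc s * |l1 - μ| * u = s * (|l1 - μ| * u) := by ring
        _ ≤ s * K := mul_le_mul_of_nonneg_left hMu hs0.le
    have h4 : s * K ≤ θ * K := mul_le_mul_of_nonneg_right hsθ hKpos.le
    have h5 : min δ 1 * (c0 / 2) ≤ δ * (c0 / 2) :=
      mul_le_mul_of_nonneg_right (min_le_left δ 1) (by linarith)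
    linarith
  -- norm of the residual
  set N : ℝ := euclNorm (w + e • B.mulVec v1) with hNdef
  have hup : N ≤ euclNorm w + |e| * u := by
    have := euclNorm_add_le w (e • B.mulVec v1)
    rwa [euclNorm_smul, ← hudef] at this
  have hlo : euclNorm w - |e| * u ≤ N := by
    have := euclNorm_lower w (e • B.mulVec v1)
    rwa [euclNorm_smul, ← hudef] at this
  have hresnorm : euclNorm (A.mulVec (xθ θ) - ρθ • B.mulVec (xθ θ)) = s * N := by
    rw [hresθ, euclNorm_smul, abs_of_pos hs0]
  have hδw : δ * (c0 / 2) ≤ δ * euclNorm w := mul_le_mul_of_nonneg_left hwhalf hδ.le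
  have hexp1 : (1 - δ) * euclNorm w = euclNorm w - δ * euclNorm w := by ring
  have hexp2 : (1 + δ) * euclNorm w = euclNorm w + δ * euclNorm w := by ring
  have key1 : (1 - δ) * euclNorm w ≤ N := by
    rw [hexp1]; linarith [hlo, hebound, hδw]
  have key2 : N ≤ (1 + δ) * euclNorm w := by
    rw [hexp2]; linarith [hup, hebound, hδw]
  rw [hresnorm]
  constructor
  · calc (1 - δ) * s * euclNorm w = s * ((1 - δ) * euclNorm w) := by ring
      _ ≤ s * N := mul_le_mul_of_nonneg_left key1 hs0.le
  · calc s * N ≤ s * ((1 + δ) * euclNorm w) := mul_le_mul_of_nonneg_left key2 hs0.le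
      _ = (1 + δ) * s * euclNorm w := by ring
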